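/- The morphed distance-three quantum Reed-Muller code QRM(d) (obtained by morphing one interior hyperoctahedron ball code) has exactly d logical Z operators of weight two. -/

import Mathlib

/-!
The morphed distance-three quantum Reed–Muller code `QRM(d)`, obtained by
morphing the interior hyperoctahedron ball code of the `[[2^{d+1}−1, 1, 3]]`
color-code representation of `QRM(d)`.

In coordinates: the parent `QRM(d)` code has qubits labelled by nonzero vectors
of `F₂^{d+1}`, X-stabilizers `{w : w_i = 1}` and Z-stabilizer group spanned by
the supports of the monomials of degree `≤ d − 1`.  Morphing the ball
`{w : w_{d+1} = 1}` gives the `[[2^d + d − 1, 1, 2]]` code whose qubits are the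
`2^d − 1` remaining simplex qubits, labelled by nonzero `w ∈ F₂^d`, plus `d`
edge qubits `ī`, with:
* X-stabilizers (for `i ∈ Fin d`): `X` on `{w : w_i = 1} ∪ {ī}`;
* Z-stabilizer group spanned by, for each nonempty `S ⊆ Fin d` with
  `|S| ≤ d − 1`: `Z` on `{w : w_S = 1}`, together with the edge qubit `k̄`
  (`{k} = complement of S`) when `|S| = d − 1`.
-/

/-- Simplex qubit labels. -/
abbrev Simp (d : ℕ) := {w : Fin d → ZMod 2 // w ≠ 0}

/-- Qubits of the morphed `QRM(d)` code: simplex qubits plus `d` edge qubits. -/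
abbrev MorQ (d : ℕ) := Simp d ⊕ Fin d

/-- The X-stabilizer generator associated with `i : Fin d`. -/
def morXcheck (d : ℕ) (i : Fin d) : MorQ d → ZMod 2
  | .inl w => if w.1 i = 1 then 1 else 0
  | .inr j => if j = i then 1 else 0

/-- The Z-stabilizer generator associated with a nonempty set `S ⊆ Fin d` of
cardinality `≤ d − 1`. -/
def morZgen (d : ℕ) (S : Finset (Fin d)) : MorQ d → ZMod 2
  | .inl w => if ∀ i ∈ S, w.1 i = 1 then 1 else 0
  | .inr j => if S.card = d - 1 ∧ j ∉ S then 1 else 0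

/-- The Z-stabilizer group (as an `F₂`-span). -/
def morZspan (d : ℕ) : Submodule (ZMod 2) (MorQ d → ZMod 2) :=
  Submodule.span (ZMod 2)
    {z | ∃ S : Finset (Fin d), S.Nonempty ∧ S.card ≤ d - 1 ∧ z = morZgen d S}

/-- `b` is a logical Z operator of weight two: a Z-type Pauli commuting with
all X-stabilizers, not in the Z-stabilizer group, of weight exactly two. -/
def IsWeightTwoLogicalZ (d : ℕ) (b : MorQ d → ZMod 2) : Prop :=
  (∀ i : Fin d, (∑ q, morXcheck d i q * b q) = 0) ∧
  b ∉ morZspan d ∧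
  (Finset.univ.filter fun q => b q ≠ 0).card = 2

/-!
The X-checks of a qubit form its column in `F₂^d`: `w` for the simplex qubit `w`
and `e_j` for the edge qubit `j̄`. A weight-two Z operator commutes with every X-check
exactly when its two qubits have the same column, i.e. when it is supported on
`{e_j, j̄}` for some `j`. None of these `d` operators is a stabilizer: each has odd
weight on the simplex qubits, while every Z-generator has even weight there, its
simplex part being the `2^{d-|S|}` vectors with `w_S = 1`, where `|S| < d`.
-/

open Finset

section AddInvariant

variable {V R : Type*} [AddCommGroup V] [Fintype V] [Ring R] [CharP R 2]

/-- Translation by `v` pairs up the points of `V`, and each pair contributes `2 • f w = 0`. -/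
theorem sum_eq_zero_of_add_invariant (f : V → R) {v : V} (hv : v ≠ 0) (hvv : v + v = 0)
    (hf : ∀ w, f (w + v) = f w) : ∑ w, f w = 0 := by
  refine sum_involution (fun w _ => w + v) (fun w _ => by rw [hf, CharTwo.add_self_eq_zero])
    (fun w _ _ h => hv (by simpa using h)) (fun _ _ => mem_univ _)
    (fun w _ => by rw [add_assoc, hvv, add_zero])

end AddInvariant

section WeightTwo

variable {ι : Type*} [DecidableEq ι]

theorem single_add_single_ne_zero_iff {R : Type*} [NonAssocSemiring R] [Nontrivial R] {p q : ι}
    (hpq : p ≠ q) (x : ι) :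
    (Pi.single p 1 + Pi.single q 1 : ι → R) x ≠ 0 ↔ x = p ∨ x = q := by
  by_cases hxp : x = p <;> by_cases hxq : x = q <;> simp_all

variable [Fintype ι]

theorem card_support_eq_two_iff {b : ι → ZMod 2} :
    #{x | b x ≠ 0} = 2 ↔ ∃ p q, p ≠ q ∧ Pi.single p 1 + Pi.single q 1 = b := by
  rw [card_eq_two]
  refine exists₂_congr fun p q => and_congr_right fun hpq => ?_
  have hsupp := single_add_single_ne_zero_iff (R := ZMod 2) hpq
  constructor
  · intro hb
    funext x
    have hx : b x ≠ 0 ↔ x = p ∨ x = q := by simpa using congrArg (x ∈ ·) hb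
    have hbin : ∀ a : ZMod 2, a ≠ 0 ↔ a = 1 := by decide
    by_cases h : x = p ∨ x = q
    · rw [(hbin _).mp ((hsupp x).mpr h), (hbin _).mp (hx.mpr h)]
    · rw [not_ne_iff.mp (mt (hsupp x).mp h), not_ne_iff.mp (mt hx.mp h)]
  · rintro rfl
    ext x
    simp only [mem_filter, mem_univ, true_and, mem_insert, mem_singleton, hsupp]

theorem sum_mul_single_add_single {R : Type*} [NonAssocSemiring R] (f : ι → R) (p q : ι) :
    ∑ x, f x * (Pi.single p 1 + Pi.single q 1 : ι → R) x = f p + f q := by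
  simp [mul_add, sum_add_distrib, Pi.single_apply]

end WeightTwo

def morCol (d : ℕ) : MorQ d → Fin d → ZMod 2
  | .inl w => w.1
  | .inr j => Pi.single j 1

theorem morXcheck_eq_morCol (d : ℕ) (i : Fin d) (q : MorQ d) :
    morXcheck d i q = morCol d q i := by
  rcases q with w | j
  · have hbit : ∀ a : ZMod 2, (if a = 1 then 1 else 0) = a := by decide
    exact hbit (w.1 i)
  · simp [morXcheck, morCol, Pi.single_apply, eq_comm]

theorem sum_morXcheck_mul_single_add_single_eq_zero_iff (d : ℕ) (p q : MorQ d) :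
    (∀ i, ∑ x, morXcheck d i x * (Pi.single p 1 + Pi.single q 1 : MorQ d → ZMod 2) x = 0) ↔
      morCol d p = morCol d q := by
  simp only [sum_mul_single_add_single, morXcheck_eq_morCol, CharTwo.add_eq_zero, funext_iff]

def basisQubit (d : ℕ) (j : Fin d) : Simp d :=
  ⟨Pi.single j 1, by simp⟩

def edgePairLogical (d : ℕ) (j : Fin d) : MorQ d → ZMod 2 :=
  Pi.single (.inl (basisQubit d j)) 1 + Pi.single (.inr j) 1

theorem exists_edgePairLogical_of_morCol_eq {d : ℕ} {p q : MorQ d} (hpq : p ≠ q)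
    (h : morCol d p = morCol d q) : ∃ j, edgePairLogical d j = Pi.single p 1 + Pi.single q 1 := by
  rcases p with w | j <;> rcases q with w' | j'
  · exact absurd (congrArg Sum.inl (Subtype.ext h)) hpq
  · exact ⟨j', by rw [edgePairLogical, show basisQubit d j' = w from Subtype.ext h.symm]⟩
  · exact ⟨j, by rw [edgePairLogical, add_comm, show basisQubit d j = w' from Subtype.ext h]⟩
  · exact absurd (congrArg Sum.inr (by simpa [morCol, Pi.single_apply] using congrFun h j)) hpq

/-- Commutation with the logical X operator acting on all simplex qubits. -/
def simplexParity (d : ℕ) : (MorQ d → ZMod 2) →ₗ[ZMod 2] ZMod 2 :=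
  ∑ w : Simp d, LinearMap.proj (.inl w)

theorem simplexParity_apply (d : ℕ) (b : MorQ d → ZMod 2) :
    simplexParity d b = ∑ w, b (.inl w) := by
  simp only [simplexParity, LinearMap.coe_sum, LinearMap.coe_proj, Finset.sum_apply, Function.eval]

theorem simplexParity_morZgen {d : ℕ} {S : Finset (Fin d)} (hS : S.Nonempty)
    (hSd : #S < d) : simplexParity d (morZgen d S) = 0 := by
  obtain ⟨i₀, -, hi₀⟩ :=
    exists_mem_notMem_of_card_lt_card (s := S) (t := univ) (by simpa using hSd)
  let f : (Fin d → ZMod 2) → ZMod 2 := fun w => if ∀ i ∈ S, w i = 1 then 1 else 0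
  have hf0 : f 0 = 0 := by
    obtain ⟨i, hi⟩ := hS
    exact if_neg fun h => zero_ne_one (h i hi)
  have hf : ∀ w, f (w + Pi.single i₀ 1) = f w := by
    intro w
    refine if_congr (forall₂_congr fun i hi => ?_) rfl rfl
    rw [Pi.add_apply, Pi.single_eq_of_ne (ne_of_mem_of_not_mem hi hi₀), add_zero]
  calc simplexParity d (morZgen d S)
      = ∑ w ∈ univ.erase 0, f w := by
        rw [sum_subtype (p := (· ≠ 0)) (univ.erase 0) (by simp)]
        exact simplexParity_apply d _
    _ = ∑ w, f w := sum_erase univ hf0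
    _ = 0 := sum_eq_zero_of_add_invariant f (by simp)
        (funext fun _ => CharTwo.add_self_eq_zero _) hf

theorem simplexParity_edgePairLogical (d : ℕ) (j : Fin d) :
    simplexParity d (edgePairLogical d j) = 1 := by
  simp [simplexParity_apply, edgePairLogical, Pi.single_apply]

theorem morZspan_le_ker_simplexParity (d : ℕ) :
    morZspan d ≤ LinearMap.ker (simplexParity d) := by
  rw [morZspan, Submodule.span_le]
  rintro _ ⟨S, hS, hSd, rfl⟩
  have hpos := hS.card_pos
  exact simplexParity_morZgen hS (by omega)

theorem edgePairLogical_notMem_morZspan (d : ℕ) (j : Fin d) :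
    edgePairLogical d j ∉ morZspan d := fun h => by
  simpa [simplexParity_edgePairLogical] using morZspan_le_ker_simplexParity d h

theorem isWeightTwoLogicalZ_iff (d : ℕ) (b : MorQ d → ZMod 2) :
    IsWeightTwoLogicalZ d b ↔ b ∈ Set.range (edgePairLogical d) := by
  constructor
  · rintro ⟨hcomm, -, hwt⟩
    obtain ⟨p, q, hpq, rfl⟩ := card_support_eq_two_iff.mp hwt
    exact exists_edgePairLogical_of_morCol_eq hpq
      ((sum_morXcheck_mul_single_add_single_eq_zero_iff d p q).mp hcomm)
  · rintro ⟨j, rfl⟩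
    exact ⟨(sum_morXcheck_mul_single_add_single_eq_zero_iff d _ _).mpr rfl,
      edgePairLogical_notMem_morZspan d j,
      card_support_eq_two_iff.mpr ⟨_, _, Sum.inl_ne_inr, rfl⟩⟩

theorem edgePairLogical_injective (d : ℕ) : Function.Injective (edgePairLogical d) := by
  intro j k h
  simpa [edgePairLogical, Pi.single_apply] using congrFun h (.inr j)

theorem morphed_QRM_weight_two_logicals_general (d : ℕ) :
    Nat.card {b : MorQ d → ZMod 2 // IsWeightTwoLogicalZ d b} = d := by
  rw [Nat.card_congr (Equiv.subtypeEquivRight (isWeightTwoLogicalZ_iff d)),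
    Nat.card_range_of_injective (edgePairLogical_injective d), Nat.card_fin]

/-- The morphed distance-three quantum Reed–Muller code
`QRM(d)` has exactly `d` logical Z operators of weight two. -/
theorem morphed_QRM_weight_two_logicals (d : ℕ) (hd : 2 ≤ d) :
    Nat.card {b : MorQ d → ZMod 2 // IsWeightTwoLogicalZ d b} = d :=
  morphed_QRM_weight_two_logicals_general d
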